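/- Let n ≥ 3 be an integer, ℓ > 0, β ∈ ℝ, m ∈ ℝ, and let r : (a,b) → (0,∞) be a differentiable function satisfying f(r(x)) > 0 and r'(x) = r(x)·√(f(r(x))) for all x, where f(ρ) = β − 2m/ρ^{n−2} − ρ²/ℓ². Then φ(x) := r(x)^{(n−2)/2} is twice differentiable and satisfies the Yamabe equation φ'' = ((n−2)²β/4)·φ − (n(n−2)/(4ℓ²))·φ^{(n+2)/(n−2)} on (a,b). -/

import Mathlib

/-!
If `r' = r √(f ∘ r)` then `φ = r ^ p` satisfies `φ' = p √(f ∘ r) φ`, and the flow turns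
`(√(f ∘ r))'` into `r f'(r) / 2`, so `φ'' = p (p f(r) + r f'(r) / 2) φ`. For the Birmingham
function and `p = (n - 2) / 2` the mass terms cancel,
`p f(ρ) + ρ f'(ρ) / 2 = p β - (n / 2) ρ² / ℓ²`, and `ρ² φ = φ ^ ((n + 2) / (n - 2))`.
-/

open Real Filter Topology

section SqrtFlow

variable {r f : ℝ → ℝ} {x p : ℝ}

lemma hasDerivAt_rpow_of_mul_sqrt (hr : 0 < r x) (h : HasDerivAt r (r x * √(f (r x))) x) :
    HasDerivAt (fun y => r y ^ p) (p * √(f (r x)) * r x ^ p) x := by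
  refine (h.rpow_const (p := p) (Or.inl hr.ne')).congr_deriv ?_
  rw [rpow_sub_one hr.ne']
  field_simp

lemma hasDerivAt_deriv_rpow_of_mul_sqrt {f' : ℝ} (hr : ∀ᶠ y in 𝓝 x, 0 < r y)
    (h : ∀ᶠ y in 𝓝 x, HasDerivAt r (r y * √(f (r y))) y) (hf : 0 < f (r x))
    (hf' : HasDerivAt f f' (r x)) :
    HasDerivAt (deriv fun y => r y ^ p) (p * (p * f (r x) + r x * f' / 2) * r x ^ p) x := by
  have hderiv : deriv (fun y => r y ^ p) =ᶠ[𝓝 x] fun y => p * √(f (r y)) * r y ^ p := by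
    filter_upwards [hr, h] with y hry hy using (hasDerivAt_rpow_of_mul_sqrt hry hy).deriv
  have hsqrt : HasDerivAt (fun y => √(f (r y))) (r x * f' / 2) x := by
    refine ((hf'.comp x h.self_of_nhds).sqrt hf.ne').congr_deriv ?_
    have := (sqrt_pos.mpr hf).ne'
    rw [Function.comp_apply]
    field_simp
  refine HasDerivAt.congr_of_eventuallyEq ?_ hderiv
  refine ((hsqrt.const_mul p).mul
    (hasDerivAt_rpow_of_mul_sqrt hr.self_of_nhds h.self_of_nhds)).congr_deriv ?_
  linear_combination (r x ^ p * p ^ 2) * mul_self_sqrt hf.le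

end SqrtFlow

lemma rpow_rpow_add_two_div {ρ p : ℝ} (hρ : 0 < ρ) (hp : p ≠ 0) :
    (ρ ^ p) ^ ((p + 2) / p) = ρ ^ p * ρ ^ 2 := by
  rw [← rpow_mul hρ.le, ← rpow_natCast, ← rpow_add hρ]
  congr 1
  field_simp
  push_cast; ring

noncomputable def birmingham (n : ℕ) (β m ℓ ρ : ℝ) : ℝ := β - 2 * m / ρ ^ (n - 2) - ρ ^ 2 / ℓ ^ 2

/-- The derivative is written as `(ρ f'(ρ)) / ρ`, the form in which it enters the Yamabe
coefficient. -/
lemma hasDerivAt_birmingham (n : ℕ) (β m ℓ : ℝ) {ρ : ℝ} (hρ : ρ ≠ 0) :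
    HasDerivAt (birmingham n β m ℓ)
      ((2 * (n - 2 : ℕ) * m / ρ ^ (n - 2) - 2 * ρ ^ 2 / ℓ ^ 2) / ρ) ρ := by
  have hfun : birmingham n β m ℓ =
      fun y => β - 2 * m * y ^ (-(n - 2 : ℕ) : ℤ) - y ^ 2 / ℓ ^ 2 := by
    ext y; simp [birmingham, div_eq_mul_inv]
  rw [hfun]
  refine (((hasDerivAt_const ρ β).sub
    ((hasDerivAt_zpow _ ρ (Or.inl hρ)).const_mul (2 * m))).sub
    ((hasDerivAt_pow 2 ρ).div_const (ℓ ^ 2))).congr_deriv ?_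
  rw [zpow_sub_one₀ hρ, zpow_neg, zpow_natCast]
  push_cast
  field_simp
  ring

lemma birmingham_mass_cancel {n : ℕ} (hn : 2 ≤ n) (β m ℓ : ℝ) {ρ : ℝ} (hρ : ρ ≠ 0) :
    ((n : ℝ) - 2) / 2 * birmingham n β m ℓ ρ
        + ρ * ((2 * (n - 2 : ℕ) * m / ρ ^ (n - 2) - 2 * ρ ^ 2 / ℓ ^ 2) / ρ) / 2
      = ((n : ℝ) - 2) / 2 * β - n / 2 * ρ ^ 2 / ℓ ^ 2 := by
  rw [birmingham, Nat.cast_sub hn]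
  field_simp
  ring

theorem birmingham_solves_yamabe_general (n : ℕ) (hn : 3 ≤ n) (ℓ β m a b : ℝ)
    (r : ℝ → ℝ)
    (hpos : ∀ x ∈ Set.Ioo a b, 0 < r x)
    (hf : ∀ x ∈ Set.Ioo a b, 0 < β - 2 * m / (r x) ^ (n - 2) - (r x) ^ 2 / ℓ ^ 2)
    (hder : ∀ x ∈ Set.Ioo a b,
      HasDerivAt r (r x * Real.sqrt (β - 2 * m / (r x) ^ (n - 2) - (r x) ^ 2 / ℓ ^ 2)) x) :
    ∀ x ∈ Set.Ioo a b,
      HasDerivAt (deriv (fun x => (r x) ^ (((n : ℝ) - 2) / 2)))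
        ((((n : ℝ) - 2) ^ 2 * β / 4) * (r x) ^ (((n : ℝ) - 2) / 2)
          - ((n : ℝ) * ((n : ℝ) - 2) / (4 * ℓ ^ 2))
            * ((r x) ^ (((n : ℝ) - 2) / 2)) ^ (((n : ℝ) + 2) / ((n : ℝ) - 2))) x := by
  intro x hx
  have hn' : (n : ℝ) - 2 ≠ 0 := by
    have : (3 : ℝ) ≤ n := by exact_mod_cast hn
    linarith
  have hIoo : Set.Ioo a b ∈ 𝓝 x := isOpen_Ioo.mem_nhds hx
  have hrx := hpos x hx
  refine (hasDerivAt_deriv_rpow_of_mul_sqrt (f := birmingham n β m ℓ)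
    (eventually_of_mem hIoo hpos) (eventually_of_mem hIoo hder) (hf x hx)
    (hasDerivAt_birmingham n β m ℓ hrx.ne')).congr_deriv ?_
  have hexp : ((n : ℝ) + 2) / ((n : ℝ) - 2) = (((n : ℝ) - 2) / 2 + 2) / (((n : ℝ) - 2) / 2) := by
    field_simp; ring
  rw [birmingham_mass_cancel (by omega) β m ℓ hrx.ne', hexp,
    rpow_rpow_add_two_div hrx (div_ne_zero hn' two_ne_zero)]
  ring

/-- Time-symmetric Birmingham slices solve the spherically-symmetric Yamabe
equation: if `r : (a,b) → (0,∞)` satisfies `f(r) > 0` and `r' = r·√(f(r))`, where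
`f(ρ) = β − 2m/ρ^(n−2) − ρ²/ℓ²`, then `φ = r^((n−2)/2)` is twice differentiable
and satisfies `φ'' = ((n−2)²β/4)·φ − (n(n−2)/(4ℓ²))·φ^((n+2)/(n−2))` on `(a,b)`. -/
theorem birmingham_solves_yamabe (n : ℕ) (hn : 3 ≤ n) (ℓ β m a b : ℝ) (hℓ : 0 < ℓ)
    (r : ℝ → ℝ)
    (hpos : ∀ x ∈ Set.Ioo a b, 0 < r x)
    (hf : ∀ x ∈ Set.Ioo a b, 0 < β - 2 * m / (r x) ^ (n - 2) - (r x) ^ 2 / ℓ ^ 2)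
    (hder : ∀ x ∈ Set.Ioo a b,
      HasDerivAt r (r x * Real.sqrt (β - 2 * m / (r x) ^ (n - 2) - (r x) ^ 2 / ℓ ^ 2)) x) :
    ∀ x ∈ Set.Ioo a b,
      HasDerivAt (deriv (fun x => (r x) ^ (((n : ℝ) - 2) / 2)))
        ((((n : ℝ) - 2) ^ 2 * β / 4) * (r x) ^ (((n : ℝ) - 2) / 2)
          - ((n : ℝ) * ((n : ℝ) - 2) / (4 * ℓ ^ 2))
            * ((r x) ^ (((n : ℝ) - 2) / 2)) ^ (((n : ℝ) + 2) / ((n : ℝ) - 2))) x :=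
  birmingham_solves_yamabe_general n hn ℓ β m a b r hpos hf hder
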